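/- On M = ℝ² with the symmetries s_{(a,ℓ)}(a′,ℓ′) = (2a − a′, 2cosh(a − a′)ℓ − ℓ′), each map s_x is everywhere differentiable and its derivative preserves the standard symplectic form: for every x, y ∈ ℝ² and all u, v ∈ ℝ², ω(D s_x(y)u, D s_x(y)v) = ω(u, v), where D s_x(y) is the (Fréchet) derivative of s_x at y and ω((u₁,u₂),(v₁,v₂)) = u₁v₂ − u₂v₁. (Thus each symmetry is a symplectomorphism of (ℝ², da∧dℓ), as asserted in Section 8.3.) -/

import Mathlib

/-- The symmetry `s_{(a,ℓ)}(a',ℓ') = (2a - a', 2cosh(a - a')ℓ - ℓ')` of the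
solvable symplectic symmetric surface in global Darboux coordinates. -/
noncomputable def symmPoincare (x y : ℝ × ℝ) : ℝ × ℝ :=
  (2 * x.1 - y.1, 2 * Real.cosh (x.1 - y.1) * x.2 - y.2)

/-- The standard symplectic form on `ℝ²`. -/
def stdSymp (u v : ℝ × ℝ) : ℝ := u.1 * v.2 - u.2 * v.1

lemma symmPoincare_hasFDerivAt (x y : ℝ × ℝ) :
    HasFDerivAt (symmPoincare x)
      (((0 : ℝ × ℝ →L[ℝ] ℝ) - ContinuousLinearMap.fst ℝ ℝ ℝ).prod
        ((-((2 * Real.sinh (x.1 - y.1) * x.2) • ContinuousLinearMap.fst ℝ ℝ ℝ))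
          - ContinuousLinearMap.snd ℝ ℝ ℝ)) y := by
  apply HasFDerivAt.prodMk
  · exact (hasFDerivAt_const (2 * x.1) y).sub
      (ContinuousLinearMap.fst ℝ ℝ ℝ).hasFDerivAt
  · have h1 : HasDerivAt (fun t : ℝ => 2 * Real.cosh (x.1 - t) * x.2)
        (-2 * Real.sinh (x.1 - y.1) * x.2) y.1 := by
      have hc : HasDerivAt (fun t : ℝ => x.1 - t) (-1) y.1 := by
        simpa [Pi.sub_def] using (hasDerivAt_const y.1 x.1).sub (hasDerivAt_id y.1)
      have := ((Real.hasDerivAt_cosh (x.1 - y.1)).comp y.1 hc).const_mul 2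
      simpa [mul_comm, mul_assoc, mul_left_comm] using this.mul_const x.2
    have h2 : HasFDerivAt (fun y : ℝ × ℝ => 2 * Real.cosh (x.1 - y.1) * x.2)
        (-((2 * Real.sinh (x.1 - y.1) * x.2) • ContinuousLinearMap.fst ℝ ℝ ℝ)) y := by
      have := h1.comp_hasFDerivAt y (ContinuousLinearMap.fst ℝ ℝ ℝ).hasFDerivAt
      simpa [Function.comp_def, neg_mul, neg_smul] using this
    exact h2.sub (ContinuousLinearMap.snd ℝ ℝ ℝ).hasFDerivAt

/-- each symmetry `s_x` is everywhere differentiable and its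
derivative preserves the standard symplectic form `ω = da ∧ dℓ`. -/
theorem symmPoincare_is_symplectomorphism :
    ∀ x y : ℝ × ℝ,
      DifferentiableAt ℝ (symmPoincare x) y ∧
      ∀ u v : ℝ × ℝ,
        stdSymp (fderiv ℝ (symmPoincare x) y u) (fderiv ℝ (symmPoincare x) y v)
          = stdSymp u v := by
  intro x y
  have h := symmPoincare_hasFDerivAt x y
  refine ⟨h.differentiableAt, ?_⟩
  intro u v
  rw [h.fderiv]
  simp [stdSymp, ContinuousLinearMap.prod_apply]
  ring
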